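/- Let n ≥ 2, β > 0 and r₀ > 0, and define D(γ) = √( e^{2β} + 2(n−1) e^{β(1+γ)} γ + (n−1) e^{2βγ} (1 + (n−2)γ) ). Let (γ, r) : [0,∞) → ℝ × (0,∞) be a C¹ solution of the Peri-LN symmetric system ṙ(t) = ((n−1) e^{βγ(t)} γ(t) + e^{β}) / D(γ(t)) and γ̇(t) = 2 e^{βγ(t)} (1 − γ(t)) ((n−1)γ(t) + 1) / ( r(t) D(γ(t)) ), with γ(0) = 0 and r(0) = r₀. Then 0 ≤ γ(t) < 1 for all t, γ(t) → 1 as t → ∞, and r(t)/t → 1 as t → ∞. -/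

import Mathlib

open Filter Real

/-- The denominator `D(γ)` of the nGPT/Peri-LN symmetric cosine-similarity ODE. -/
noncomputable def symDenom (n : ℕ) (β γ : ℝ) : ℝ :=
  Real.sqrt (Real.exp (2 * β) + 2 * (n - 1) * Real.exp (β * (1 + γ)) * γ +
    (n - 1) * Real.exp (2 * β * γ) * (1 + (n - 2) * γ))

open Set Topology

/-!
Write the equation for `γ` as `γ' = (1 - γ) k` with `k = symRate n β γ / r`. While `γ ≥ 0` the
magnitude grows at the rate `N(γ)/D(γ) ∈ [0, 1]` (`N = symNum`, `D = symDenom`), so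
`r₀ ≤ r t ≤ r₀ + t`. A fencing argument keeps `γ` in `[0, 1)`: at `γ = 0` its derivative is
positive, and below `1` the rate `k ≤ 2n/r₀` is bounded, so `1 - γ` decays at most exponentially
and never vanishes. Conversely `k ≥ c / (r₀ + t)` with `c = 2 / (n e^β)`, so
`1 - γ t ≤ (r₀ / (r₀ + t)) ^ c → 0`. Finally `ṙ = N(γ)/D(γ) → N(1)/D(1) = 1`, and a function whose
derivative tends to `1` grows like `t`.
-/

theorem monotoneOn_Ici_of_hasDerivAt_nonneg {f f' : ℝ → ℝ} {a : ℝ}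
    (hf : ∀ t, a ≤ t → HasDerivAt f (f' t) t) (hf' : ∀ t, a ≤ t → 0 ≤ f' t) :
    MonotoneOn f (Ici a) :=
  monotoneOn_of_hasDerivWithinAt_nonneg (convex_Ici a)
    (fun t ht => (hf t ht).continuousAt.continuousWithinAt)
    (fun t ht => (hf t (interior_subset ht)).hasDerivWithinAt)
    (fun t ht => hf' t (interior_subset ht))

theorem image_le_of_deriv_lt_deriv_boundary_Ici {f f' B B' : ℝ → ℝ} {a : ℝ}
    (hf : ∀ t, a ≤ t → HasDerivAt f (f' t) t) (hB : ∀ t, HasDerivAt B (B' t) t)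
    (ha : f a ≤ B a) (bound : ∀ t, a ≤ t → f t = B t → f' t < B' t) {t : ℝ} (ht : a ≤ t) :
    f t ≤ B t :=
  image_le_of_deriv_right_lt_deriv_boundary
    (fun x hx => (hf x hx.1).continuousAt.continuousWithinAt)
    (fun x hx => (hf x hx.1).hasDerivWithinAt) ha hB (fun x hx => bound x hx.1) ⟨ht, le_rfl⟩

theorem le_mul_exp_sub_of_deriv_le_neg_mul {u u' A A' : ℝ → ℝ} {a : ℝ}
    (hu : ∀ t, a ≤ t → HasDerivAt u (u' t) t) (hA : ∀ t, a ≤ t → HasDerivAt A (A' t) t)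
    (h : ∀ t, a ≤ t → u' t ≤ -(A' t * u t)) {t : ℝ} (ht : a ≤ t) :
    u t ≤ u a * exp (A a - A t) := by
  have hmono : MonotoneOn (fun s => -(u s * exp (A s))) (Ici a) :=
    monotoneOn_Ici_of_hasDerivAt_nonneg (fun s hs => ((hu s hs).mul (hA s hs).exp).neg)
      fun s hs => by nlinarith [h s hs, exp_pos (A s)]
  have := hmono self_mem_Ici ht ht
  rw [exp_sub, mul_div_assoc', le_div_iff₀ (exp_pos _)]
  linarith

theorem eventually_lt_div_self_of_tendsto_deriv {f f' : ℝ → ℝ} {l m : ℝ}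
    (hf : ∀ᶠ t in atTop, HasDerivAt f (f' t) t) (hf' : Tendsto f' atTop (𝓝 l)) (hm : m < l) :
    ∀ᶠ t in atTop, m < f t / t := by
  obtain ⟨m', hmm', hm'l⟩ := exists_between hm
  obtain ⟨T, hT⟩ := eventually_atTop.1 (hf.and (hf'.eventually_const_lt hm'l))
  have hgrow : MonotoneOn (fun s => f s - m' * s) (Ici T) :=
    monotoneOn_Ici_of_hasDerivAt_nonneg
      (fun s hs => (hT s hs).1.sub ((hasDerivAt_id s).const_mul m'))
      fun s hs => by simpa using (hT s hs).2.le
  have hlim : Tendsto (fun t => m' + (f T - m' * T) / t) atTop (𝓝 m') := by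
    simpa using tendsto_const_nhds.add
      (tendsto_const_nhds.div_atTop (tendsto_id : Tendsto (fun t : ℝ => t) atTop atTop))
  filter_upwards [hlim.eventually_const_lt hmm', eventually_ge_atTop T,
    eventually_gt_atTop 0] with t hlt hTt ht
  calc m < m' + (f T - m' * T) / t := hlt
    _ = (f T - m' * T + m' * t) / t := by field_simp; ring
    _ ≤ f t / t := by
      gcongr
      linarith [hgrow self_mem_Ici hTt hTt]

theorem tendsto_div_self_of_tendsto_deriv {f f' : ℝ → ℝ} {l : ℝ}
    (hf : ∀ᶠ t in atTop, HasDerivAt f (f' t) t) (hf' : Tendsto f' atTop (𝓝 l)) :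
    Tendsto (fun t => f t / t) atTop (𝓝 l) := by
  refine tendsto_order.2 ⟨fun m hm => eventually_lt_div_self_of_tendsto_deriv hf hf' hm,
    fun M hM => ?_⟩
  filter_upwards [eventually_lt_div_self_of_tendsto_deriv (hf.mono fun t h => h.neg) hf'.neg
    (neg_lt_neg hM)] with t ht
  rw [Pi.neg_apply, neg_div] at ht
  linarith

section OneSubMulRate

variable {γ k : ℝ → ℝ}

theorem nonneg_of_hasDerivAt_one_sub_mul (hγ : ∀ t, 0 ≤ t → HasDerivAt γ ((1 - γ t) * k t) t)
    (hγ0 : 0 ≤ γ 0) (hk : ∀ t, 0 ≤ t → γ t = 0 → 0 < k t) {t : ℝ} (ht : 0 ≤ t) : 0 ≤ γ t :=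
  neg_nonpos.1 <| image_le_of_deriv_lt_deriv_boundary_Ici (B := fun _ => 0) (B' := fun _ => 0)
    (fun s hs => (hγ s hs).neg) (fun _ => hasDerivAt_const _ _) (neg_nonpos.2 hγ0)
    (fun s hs hs0 => by
      have hs0 : γ s = 0 := by simpa using hs0
      simpa [hs0] using hk s hs hs0) ht

theorem lt_one_of_hasDerivAt_one_sub_mul (hγ : ∀ t, 0 ≤ t → HasDerivAt γ ((1 - γ t) * k t) t)
    (hγ0 : γ 0 < 1) {K : ℝ} (hk : ∀ t, 0 ≤ t → γ t < 1 → k t ≤ K) {t : ℝ} (ht : 0 ≤ t) :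
    γ t < 1 := by
  -- barrier `1 - B` solves `u' = -(K + 1) u`, which decays strictly faster than `1 - γ` can
  set B : ℝ → ℝ := fun s => 1 - (1 - γ 0) * exp (-((K + 1) * s)) with hB
  have hB' : ∀ s, HasDerivAt B ((K + 1) * (1 - B s)) s := fun s => by
    refine ((((hasDerivAt_id s).const_mul (K + 1)).neg.exp.const_mul (1 - γ 0)).const_sub 1
      ).congr_deriv ?_
    simp only [hB, id, Pi.neg_apply]
    ring
  have hBpos : ∀ s, 0 < 1 - B s := fun s => by
    simp only [hB, sub_sub_cancel]
    exact mul_pos (sub_pos.2 hγ0) (exp_pos _)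
  have hle := image_le_of_deriv_lt_deriv_boundary_Ici hγ hB' (by simp [hB])
    (fun s hs hγB => by
      have hpos : 0 < 1 - γ s := hγB ▸ hBpos s
      rw [← hγB]
      nlinarith [mul_le_mul_of_nonneg_left (hk s hs (by linarith)) hpos.le]) ht
  linarith [hBpos t]

theorem tendsto_one_of_hasDerivAt_one_sub_mul
    (hγ : ∀ t, 0 ≤ t → HasDerivAt γ ((1 - γ t) * k t) t) (hγ1 : ∀ t, 0 ≤ t → γ t ≤ 1)
    {c R : ℝ} (hc : 0 < c) (hR : 0 < R) (hk : ∀ t, 0 ≤ t → c / (R + t) ≤ k t) :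
    Tendsto γ atTop (𝓝 1) := by
  have hdecay : ∀ t, 0 ≤ t → 1 - γ t ≤ (1 - γ 0) * exp (c * log (R + 0) - c * log (R + t)) :=
    fun t ht => le_mul_exp_sub_of_deriv_le_neg_mul (u := fun s => 1 - γ s)
      (A := fun s => c * log (R + s)) (fun s hs => (hγ s hs).const_sub 1)
      (fun s hs => (((hasDerivAt_id s).const_add R).log (by simp; linarith)).const_mul c)
      (fun s hs => by
        have := mul_le_mul_of_nonneg_left (hk s hs) (sub_nonneg.2 (hγ1 s hs))
        simp only [id, mul_one_div]
        linarith [mul_comm (1 - γ s) (c / (R + s))]) ht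
  have hlim : Tendsto (fun t => 1 - (1 - γ 0) * exp (c * log (R + 0) - c * log (R + t)))
      atTop (𝓝 1) := by
    have : Tendsto (fun t => c * log (R + 0) - c * log (R + t)) atTop atBot :=
      tendsto_atBot_add_const_left _ _ <| tendsto_neg_atTop_atBot.comp <|
        (tendsto_log_atTop.comp (tendsto_atTop_add_const_left _ R tendsto_id)).const_mul_atTop hc
    simpa using tendsto_const_nhds.sub ((tendsto_exp_atBot.comp this).const_mul (1 - γ 0))
  refine tendsto_of_tendsto_of_tendsto_of_le_of_le' hlim tendsto_const_nhds ?_ ?_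
  all_goals filter_upwards [eventually_ge_atTop 0] with t ht
  · linarith [hdecay t ht]
  · exact hγ1 t ht

end OneSubMulRate

noncomputable def symNum (n : ℕ) (β γ : ℝ) : ℝ :=
  (n - 1) * exp (β * γ) * γ + exp β

noncomputable def symRate (n : ℕ) (β γ : ℝ) : ℝ :=
  2 * exp (β * γ) * ((n - 1) * γ + 1) / symDenom n β γ

section SymmetricSystem

variable {n : ℕ} {β g : ℝ}

-- the identity behind `N ≤ D` on `[0, 1]` and `N(1) = D(1)`
theorem symDenom_eq_sqrt (n : ℕ) (β g : ℝ) :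
    symDenom n β g =
      √(symNum n β g ^ 2 + (n - 1) * exp (β * g) ^ 2 * ((1 - g) * ((n - 1) * g + 1))) := by
  have h2β : exp (2 * β) = exp β ^ 2 := by rw [sq, ← exp_add, two_mul]
  have h1g : exp (β * (1 + g)) = exp β * exp (β * g) := by rw [← exp_add, mul_one_add]
  have h2g : exp (2 * β * g) = exp (β * g) ^ 2 := by rw [sq, ← exp_add]; ring_nf
  rw [symDenom, symNum, h2β, h1g, h2g]
  ring_nf

theorem exp_le_symNum (hn : 1 ≤ n) (hg : 0 ≤ g) : exp β ≤ symNum n β g := by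
  have hn' : (0 : ℝ) ≤ n - 1 := sub_nonneg.2 (by exact_mod_cast hn)
  exact le_add_of_nonneg_left (by positivity)

theorem symNum_le_symDenom (hn : 1 ≤ n) (hg0 : 0 ≤ g) (hg1 : g ≤ 1) :
    symNum n β g ≤ symDenom n β g := by
  have hn' : (0 : ℝ) ≤ n - 1 := sub_nonneg.2 (by exact_mod_cast hn)
  have h1g : 0 ≤ 1 - g := sub_nonneg.2 hg1
  rw [symDenom_eq_sqrt]
  exact (le_abs_self _).trans (abs_le_sqrt (le_add_of_nonneg_right (by positivity)))

theorem exp_le_symDenom (hn : 1 ≤ n) (hg0 : 0 ≤ g) (hg1 : g ≤ 1) : exp β ≤ symDenom n β g :=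
  (exp_le_symNum hn hg0).trans (symNum_le_symDenom hn hg0 hg1)

theorem symDenom_le (hn : 2 ≤ n) (hβ : 0 ≤ β) (hg1 : g ≤ 1) :
    symDenom n β g ≤ n * exp β := by
  have hn' : (2 : ℝ) ≤ n := by exact_mod_cast hn
  have hb : exp (β * g) ≤ exp β := exp_le_exp.2 (by nlinarith)
  have hb0 := exp_pos (β * g)
  have h := symDenom_eq_sqrt n β g
  rw [symNum] at h
  rw [h, sqrt_le_left (by positivity)]
  have hbg : exp β * exp (β * g) * g ≤ exp β ^ 2 := by
    have : exp (β * g) * g ≤ exp β := by nlinarith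
    nlinarith [exp_pos β]
  have hb2 : exp (β * g) ^ 2 * (1 + (n - 2) * g) ≤ exp β ^ 2 * (n - 1) := by
    have : 1 + (n - 2) * g ≤ (n : ℝ) - 1 := by nlinarith
    have : exp (β * g) ^ 2 ≤ exp β ^ 2 := by gcongr
    nlinarith
  nlinarith [mul_le_mul_of_nonneg_left hbg (by linarith : (0 : ℝ) ≤ n - 1),
    mul_le_mul_of_nonneg_left hb2 (by linarith : (0 : ℝ) ≤ n - 1)]

theorem symNum_one (n : ℕ) (β : ℝ) : symNum n β 1 = n * exp β := by
  rw [symNum, mul_one, mul_one]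
  ring

theorem symDenom_one (n : ℕ) (β : ℝ) : symDenom n β 1 = n * exp β := by
  rw [symDenom_eq_sqrt, sub_self, zero_mul, mul_zero, add_zero, symNum_one,
    sqrt_sq (by positivity)]

theorem tendsto_symNum_div_symDenom_one (hn : 1 ≤ n) :
    Tendsto (fun g => symNum n β g / symDenom n β g) (𝓝 1) (𝓝 1) := by
  have hD : symDenom n β 1 ≠ 0 := by
    rw [symDenom_one]
    exact mul_ne_zero (by exact_mod_cast (by omega : n ≠ 0)) (exp_pos β).ne'
  have hc : ContinuousAt (fun g => symNum n β g / symDenom n β g) 1 :=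
    ContinuousAt.div (by unfold symNum; fun_prop) (by unfold symDenom; fun_prop) hD
  simpa [symNum_one, symDenom_one, div_self (symDenom_one n β ▸ hD)] using hc.tendsto

theorem symRate_pos (hn : 1 ≤ n) (hg0 : 0 ≤ g) (hg1 : g ≤ 1) : 0 < symRate n β g := by
  have hn' : (0 : ℝ) ≤ n - 1 := sub_nonneg.2 (by exact_mod_cast hn)
  exact div_pos (by positivity) ((exp_pos β).trans_le (exp_le_symDenom hn hg0 hg1))

theorem symRate_le (hn : 1 ≤ n) (hβ : 0 ≤ β) (hg0 : 0 ≤ g) (hg1 : g ≤ 1) :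
    symRate n β g ≤ 2 * n := by
  have hn' : (1 : ℝ) ≤ n := by exact_mod_cast hn
  have hD := exp_le_symDenom (β := β) hn hg0 hg1
  have hb : exp (β * g) ≤ exp β := exp_le_exp.2 (by nlinarith)
  rw [symRate, div_le_iff₀ ((exp_pos β).trans_le hD)]
  have hg' : (n - 1) * g + 1 ≤ (n : ℝ) := by nlinarith
  nlinarith [mul_le_mul hb hg' (by nlinarith) (exp_pos β).le]

theorem two_div_le_symRate (hn : 2 ≤ n) (hβ : 0 ≤ β) (hg0 : 0 ≤ g) (hg1 : g ≤ 1) :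
    2 / (n * exp β) ≤ symRate n β g := by
  have hn' : (0 : ℝ) ≤ n - 1 := sub_nonneg.2 (by exact_mod_cast (by omega : 1 ≤ n))
  have hb : 1 ≤ exp (β * g) := one_le_exp (by positivity)
  have hg' : 1 ≤ (n - 1) * g + 1 := by nlinarith
  exact div_le_div₀ (by positivity) (by nlinarith)
    ((exp_pos β).trans_le (exp_le_symDenom (by omega) hg0 hg1)) (symDenom_le hn hβ hg1)

theorem symRate_mul_div (n : ℕ) (β g ρ : ℝ) :
    2 * exp (β * g) * (1 - g) * ((n - 1) * g + 1) / (ρ * symDenom n β g) =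
      (1 - g) * (symRate n β g / ρ) := by
  rw [symRate]
  ring

end SymmetricSystem

/-- Peri-LN symmetric system: asymptotics of cosine similarity and
magnitude. -/
theorem periLN_symmetric_system_asymptotics (n : ℕ) (hn : 2 ≤ n) (β : ℝ) (hβ : 0 < β)
    (r₀ : ℝ) (hr₀ : 0 < r₀) (γ r : ℝ → ℝ)
    (hrpos : ∀ t, 0 ≤ t → 0 < r t)
    (hγ0 : γ 0 = 0) (hr0 : r 0 = r₀)
    (hrdyn : ∀ t, 0 ≤ t → HasDerivAt r
      (((n - 1) * Real.exp (β * γ t) * γ t + Real.exp β) / symDenom n β (γ t)) t)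
    (hγdyn : ∀ t, 0 ≤ t → HasDerivAt γ
      (2 * Real.exp (β * γ t) * (1 - γ t) * ((n - 1) * γ t + 1) /
        (r t * symDenom n β (γ t))) t) :
    (∀ t, 0 ≤ t → 0 ≤ γ t ∧ γ t < 1) ∧
    Tendsto γ atTop (nhds 1) ∧
    Tendsto (fun t => r t / t) atTop (nhds 1) := by
  have hn1 : 1 ≤ n := by omega
  have hr' : ∀ t, 0 ≤ t → HasDerivAt r (symNum n β (γ t) / symDenom n β (γ t)) t := hrdyn
  have hγ' : ∀ t, 0 ≤ t → HasDerivAt γ ((1 - γ t) * (symRate n β (γ t) / r t)) t :=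
    fun t ht => symRate_mul_div n β (γ t) (r t) ▸ hγdyn t ht
  have hγ_nonneg : ∀ t, 0 ≤ t → 0 ≤ γ t := fun t => nonneg_of_hasDerivAt_one_sub_mul hγ'
    hγ0.ge fun s hs hs0 => div_pos (hs0 ▸ symRate_pos hn1 le_rfl zero_le_one) (hrpos s hs)
  have hr_ge : ∀ t, 0 ≤ t → r₀ ≤ r t := fun t ht => hr0 ▸
    monotoneOn_Ici_of_hasDerivAt_nonneg hr' (fun s hs => div_nonneg
      ((exp_pos β).le.trans (exp_le_symNum hn1 (hγ_nonneg s hs))) (sqrt_nonneg _))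
      self_mem_Ici ht ht
  have hγ_lt_one : ∀ t, 0 ≤ t → γ t < 1 := fun t => lt_one_of_hasDerivAt_one_sub_mul hγ'
    (hγ0.trans_lt zero_lt_one) (K := 2 * n / r₀) fun s hs hs1 => div_le_div₀ (by positivity)
      (symRate_le hn1 hβ.le (hγ_nonneg s hs) hs1.le) hr₀ (hr_ge s hs)
  have hr_le : ∀ t, 0 ≤ t → r t ≤ r₀ + t := fun t ht => by
    have := monotoneOn_Ici_of_hasDerivAt_nonneg (fun s hs => (hasDerivAt_id s).sub (hr' s hs))
      (fun s hs => sub_nonneg.2 <| div_le_one_of_le₀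
        (symNum_le_symDenom hn1 (hγ_nonneg s hs) (hγ_lt_one s hs).le) (sqrt_nonneg _))
      self_mem_Ici ht ht
    simp only [Pi.sub_apply, id, hr0] at this
    linarith
  have hγ_tendsto : Tendsto γ atTop (𝓝 1) := tendsto_one_of_hasDerivAt_one_sub_mul hγ'
    (fun t ht => (hγ_lt_one t ht).le) (by positivity : 0 < 2 / (n * exp β)) hr₀
    fun t ht => div_le_div₀ (symRate_pos hn1 (hγ_nonneg t ht) (hγ_lt_one t ht).le).le
      (two_div_le_symRate hn hβ.le (hγ_nonneg t ht) (hγ_lt_one t ht).le) (hrpos t ht) (hr_le t ht)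
  exact ⟨fun t ht => ⟨hγ_nonneg t ht, hγ_lt_one t ht⟩, hγ_tendsto,
    tendsto_div_self_of_tendsto_deriv ((eventually_ge_atTop 0).mono hr')
      ((tendsto_symNum_div_symDenom_one hn1).comp hγ_tendsto)⟩
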